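/- arXiv:2510.22884 — 4 statements merged into one kernel-verified Lean document; each statement's English description precedes it below -/
import Mathlib

section
/- In the Tukey model, if α_{i₁} ≠ α_{i₂} and ψ_{j₁} ≠ ψ_{j₂}, then θ_{i₁j₁} θ_{i₂j₂} - θ_{i₁j₂} θ_{i₂j₁} = -(α_{i₁} - α_{i₂})(ψ_{j₁} - ψ_{j₂}) ≠ 0, and consequently β₀ = -(θ_{i₁j₁} + θ_{i₂j₂} - θ_{i₁j₂} - θ_{i₂j₁}) / (θ_{i₁j₁} θ_{i₂j₂} - θ_{i₁j₂} θ_{i₂j₁}). -/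
/-! In the Tukey model `θ a p = a + p + β a p` the 2 × 2 cross product of any cycle is
`-(α₁ - α₂)(ψ₁ - ψ₂)` (the `β` and `β²` terms cancel), while the interaction contrast is
`β (α₁ - α₂)(ψ₁ - ψ₂)`; dividing one by the other recovers `β`. -/

section TukeyModel

variable {R : Type*} [CommRing R] {β : R} {θ : R → R → R}

theorem tukey_cross_product (hθ : ∀ a p, θ a p = a + p + β * a * p) (a₁ a₂ p₁ p₂ : R) :
    θ a₁ p₁ * θ a₂ p₂ - θ a₁ p₂ * θ a₂ p₁ = -((a₁ - a₂) * (p₁ - p₂)) := by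
  simp only [hθ]
  ring

theorem tukey_interaction_contrast (hθ : ∀ a p, θ a p = a + p + β * a * p) (a₁ a₂ p₁ p₂ : R) :
    θ a₁ p₁ + θ a₂ p₂ - θ a₁ p₂ - θ a₂ p₁ = β * ((a₁ - a₂) * (p₁ - p₂)) := by
  simp only [hθ]
  ring

end TukeyModel

/-- In the Tukey model, on an informative cycle the
cross-product term is nonzero and `β₀` is identified in closed form. -/
theorem tukey_beta_identified (β₀ α₁ α₂ ψ₁ ψ₂ : ℝ)
    (θ : ℝ → ℝ → ℝ) (hθ : ∀ a p : ℝ, θ a p = a + p + β₀ * a * p)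
    (hα : α₁ ≠ α₂) (hψ : ψ₁ ≠ ψ₂) :
    θ α₁ ψ₁ * θ α₂ ψ₂ - θ α₁ ψ₂ * θ α₂ ψ₁ = -((α₁ - α₂) * (ψ₁ - ψ₂)) ∧
    θ α₁ ψ₁ * θ α₂ ψ₂ - θ α₁ ψ₂ * θ α₂ ψ₁ ≠ 0 ∧
    β₀ = -(θ α₁ ψ₁ + θ α₂ ψ₂ - θ α₁ ψ₂ - θ α₂ ψ₁)
          / (θ α₁ ψ₁ * θ α₂ ψ₂ - θ α₁ ψ₂ * θ α₂ ψ₁) := by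
  have hcross := tukey_cross_product hθ α₁ α₂ ψ₁ ψ₂
  have hspread : (α₁ - α₂) * (ψ₁ - ψ₂) ≠ 0 := mul_ne_zero (sub_ne_zero.2 hα) (sub_ne_zero.2 hψ)
  refine ⟨hcross, hcross ▸ neg_ne_zero.2 hspread, ?_⟩
  rw [tukey_interaction_contrast hθ, hcross, neg_div_neg_eq, mul_div_cancel_right₀ _ hspread]
end

section
/- In the noiseless Tukey model on a connected bipartite matching network, if β₀ is known and the normalization α_{i₀} = 0 holds for a fixed worker i₀, then the parameters (α, ψ) are uniquely determined by the observed values {θ_{ij} : (i,j) ∈ O}: any two parameter vectors (α, ψ) and (α', ψ') with α_{i₀} = α'_{i₀} = 0 generating the same θ on all observed edges must coincide, provided 1 + β₀ α_i ≠ 0 and 1 + β₀ ψ_j ≠ 0 for all i, j. -/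
/-- The bipartite matching network as a simple graph on workers ⊕ firms,
with an edge between worker `i` and firm `j` whenever `(i,j)` is observed. -/
def matchGraph {W F : Type} (O : Set (W × F)) : SimpleGraph (W ⊕ F) where
  Adj u v :=
    (∃ i j, (i, j) ∈ O ∧ u = Sum.inl i ∧ v = Sum.inr j) ∨
    (∃ i j, (i, j) ∈ O ∧ u = Sum.inr j ∧ v = Sum.inl i)
  symm := by
    constructor
    rintro u v (⟨i, j, h, rfl, rfl⟩ | ⟨i, j, h, rfl, rfl⟩)
    · exact Or.inr ⟨i, j, h, rfl, rfl⟩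
    · exact Or.inl ⟨i, j, h, rfl, rfl⟩
  loopless := by
    constructor
    rintro u (⟨i, j, h, rfl, h2⟩ | ⟨i, j, h, rfl, h2⟩) <;> simp at h2

/-!
The model value `a + b + β₀ a b = a + (1 + β₀ a) b = b + (1 + β₀ b) a` is affine in each argument
with nonzero slope (equivalently, `1 + β₀ θ = (1 + β₀ a)(1 + β₀ b)`). So on an observed edge
`(i, j)`, `α i = α' i` forces `ψ j = ψ' j` and vice versa, and starting from `α i₀ = 0 = α' i₀`
agreement spreads along walks of the connected network to every worker and firm.
-/

theorem tukey_right_injective {R : Type*} [CommRing R] [NoZeroDivisors R] {c a : R}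
    (ha : 1 + c * a ≠ 0) : Function.Injective fun b => a + b + c * a * b := by
  intro b b' h
  have hprod : (1 + c * a) * (b - b') = 0 := by linear_combination h
  exact sub_eq_zero.mp ((mul_eq_zero.mp hprod).resolve_left ha)

theorem tukey_left_injective {R : Type*} [CommRing R] [NoZeroDivisors R] {c b : R}
    (hb : 1 + c * b ≠ 0) : Function.Injective fun a => a + b + c * a * b := by
  intro a a' h
  exact tukey_right_injective hb (by linear_combination h)

theorem SimpleGraph.Reachable.of_adj_imp {V : Type*} {G : SimpleGraph V} {P : V → Prop}
    (hP : ∀ u v, G.Adj u v → P u → P v) {u v : V} (huv : G.Reachable u v) (hu : P u) : P v := by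
  rw [SimpleGraph.reachable_iff_reflTransGen] at huv
  induction huv with
  | refl => exact hu
  | tail _ hvw ih => exact hP _ _ hvw ih

theorem matchGraph_adj_agree {W F : Type} {O : Set (W × F)} {β₀ : ℝ}
    {α α' : W → ℝ} {ψ ψ' : F → ℝ}
    (hα : ∀ i, 1 + β₀ * α i ≠ 0) (hψ : ∀ j, 1 + β₀ * ψ j ≠ 0)
    (hθ : ∀ p ∈ O, α p.1 + ψ p.2 + β₀ * α p.1 * ψ p.2
        = α' p.1 + ψ' p.2 + β₀ * α' p.1 * ψ' p.2)
    {u v : W ⊕ F} (huv : (matchGraph O).Adj u v)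
    (hu : Sum.elim α ψ u = Sum.elim α' ψ' u) : Sum.elim α ψ v = Sum.elim α' ψ' v := by
  rcases huv with ⟨i, j, hij, rfl, rfl⟩ | ⟨i, j, hij, rfl, rfl⟩
  · simp only [Sum.elim_inl, Sum.elim_inr] at hu ⊢
    have h := hθ (i, j) hij
    rw [← hu] at h
    exact tukey_right_injective (hα i) h
  · simp only [Sum.elim_inl, Sum.elim_inr] at hu ⊢
    have h := hθ (i, j) hij
    rw [← hu] at h
    exact tukey_left_injective (hψ j) h

theorem tukey_identification_general {W F : Type} (O : Set (W × F))
    (hconn : (matchGraph O).Connected) (β₀ : ℝ)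
    (α α' : W → ℝ) (ψ ψ' : F → ℝ) (i₀ : W)
    (hnorm : α i₀ = 0) (hnorm' : α' i₀ = 0)
    (hα : ∀ i, 1 + β₀ * α i ≠ 0) (hψ : ∀ j, 1 + β₀ * ψ j ≠ 0)
    (hθ : ∀ p ∈ O, α p.1 + ψ p.2 + β₀ * α p.1 * ψ p.2
        = α' p.1 + ψ' p.2 + β₀ * α' p.1 * ψ' p.2) :
    α = α' ∧ ψ = ψ' := by
  have hagree : ∀ u, Sum.elim α ψ u = Sum.elim α' ψ' u := fun u =>
    (hconn.preconnected (Sum.inl i₀) u).of_adj_imp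
      (fun _ _ => matchGraph_adj_agree hα hψ hθ) (by simp [hnorm, hnorm'])
  exact ⟨funext fun i => hagree (Sum.inl i), funext fun j => hagree (Sum.inr j)⟩

/-- In the noiseless Tukey model on a connected matching
network, with β₀ known and normalization α_{i₀} = 0, the productivities
are uniquely determined by the observed θ's. -/
theorem tukey_identification {W F : Type} (O : Set (W × F))
    (hconn : (matchGraph O).Connected) (β₀ : ℝ)
    (α α' : W → ℝ) (ψ ψ' : F → ℝ) (i₀ : W)
    (hnorm : α i₀ = 0) (hnorm' : α' i₀ = 0)
    (hα : ∀ i, 1 + β₀ * α i ≠ 0) (hψ : ∀ j, 1 + β₀ * ψ j ≠ 0)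
    (hα' : ∀ i, 1 + β₀ * α' i ≠ 0) (hψ' : ∀ j, 1 + β₀ * ψ' j ≠ 0)
    (hθ : ∀ p ∈ O, α p.1 + ψ p.2 + β₀ * α p.1 * ψ p.2
        = α' p.1 + ψ' p.2 + β₀ * α' p.1 * ψ' p.2) :
    α = α' ∧ ψ = ψ' :=
  tukey_identification_general O hconn β₀ α α' ψ ψ' i₀ hnorm hnorm' hα hψ hθ
end

section
/- There exists a bipartite graph that is leave-one-out connected (removing any single worker and its edges leaves the graph connected) but does not satisfy Seed-and-Snowballs connectivity for any choice of seed firm. Specifically, the graph with firms j₀,j₁,j₂,j₃ and workers i₁,...,i₅ and edges {(i₁,j₀),(i₁,j₁),(i₂,j₀),(i₂,j₁),(i₃,j₁),(i₃,j₃),(i₄,j₃),(i₄,j₂),(i₅,j₀),(i₅,j₂)} is such a graph. -/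
/-- Firm sets of the Seed-and-Snowballs iteration. -/
def snowJ {W F : Type} (E : Set (W × F)) (j₀ : F) : ℕ → Set F
  | 0 => {j₀}
  | n + 1 => snowJ E j₀ n ∪
      {j | ∃ i i' : W, i ≠ i' ∧
        (∃ j' ∈ snowJ E j₀ n, (i, j') ∈ E) ∧
        (∃ j' ∈ snowJ E j₀ n, (i', j') ∈ E) ∧
        (i, j) ∈ E ∧ (i', j) ∈ E}

/-- Worker sets of the Seed-and-Snowballs iteration. -/
def snowI {W F : Type} (E : Set (W × F)) (j₀ : F) (n : ℕ) : Set W :=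
  {i | ∃ j ∈ snowJ E j₀ n, (i, j) ∈ E}

/-- Seed-and-Snowballs connectivity: some seed firm exhausts all nodes. -/
def SeedSnowballs {W F : Type} (E : Set (W × F)) : Prop :=
  ∃ (j₀ : F) (N : ℕ), snowJ E j₀ N = Set.univ ∧ snowI E j₀ N = Set.univ

/-- The graph obtained by deleting worker `i₀` and its incident edges. -/
def looGraph {W F : Type} (E : Set (W × F)) (i₀ : W) :
    SimpleGraph ({i : W // i ≠ i₀} ⊕ F) :=
  matchGraph {p : {i : W // i ≠ i₀} × F | ((p.1 : W), p.2) ∈ E}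

/-- The counterexample graph: workers i₁,…,i₅ = 0,…,4, firms j₀,…,j₃ = 0,…,3. -/
def counterE : Set (Fin 5 × Fin 4) :=
  {(0, 0), (0, 1), (1, 0), (1, 1), (2, 1), (2, 3), (3, 3), (3, 2), (4, 0), (4, 2)}

/- Every worker is matched to exactly two firms, so the firms form a multigraph whose edges are
the workers: the 4-cycle j₀ – j₁ – j₃ – j₂ – j₀ with the edge j₀ – j₁ doubled (workers i₁, i₂).
Deleting one worker deletes one edge, and what is left is still connected.
A firm joins the snowball only when two of its workers already touch it, i.e. when the firm is
joined to the current firms by two edges of this multigraph. From any seed this happens at most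
once (j₀ and j₁ absorb each other), after which {j₀, j₁}, {j₂} or {j₃} is closed. -/

def coworkerGraph {W F : Type} (O : Set (W × F)) : SimpleGraph F :=
  SimpleGraph.fromRel fun a b => ∃ i, (i, a) ∈ O ∧ (i, b) ∈ O

def SnowballClosed {W F : Type} (E : Set (W × F)) (S : Set F) : Prop :=
  ∀ i i' j, i ≠ i' → (∃ j' ∈ S, (i, j') ∈ E) → (∃ j' ∈ S, (i', j') ∈ E) →
    (i, j) ∈ E → (i', j) ∈ E → j ∈ S

section matchGraph

variable {W F : Type} {O : Set (W × F)}

lemma matchGraph_adj_inl_inr {i : W} {j : F} (h : (i, j) ∈ O) :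
    (matchGraph O).Adj (Sum.inl i) (Sum.inr j) :=
  Or.inl ⟨i, j, h, rfl, rfl⟩

lemma matchGraph_reachable_inr_of_mem {i : W} {a b : F} (ha : (i, a) ∈ O) (hb : (i, b) ∈ O) :
    (matchGraph O).Reachable (Sum.inr a) (Sum.inr b) :=
  (matchGraph_adj_inl_inr ha).symm.reachable.trans (matchGraph_adj_inl_inr hb).reachable

lemma matchGraph_reachable_inr_of_coworkerGraph_reachable {a b : F}
    (h : (coworkerGraph O).Reachable a b) :
    (matchGraph O).Reachable (Sum.inr a) (Sum.inr b) := by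
  rw [SimpleGraph.reachable_iff_reflTransGen] at h
  induction h with
  | refl => rfl
  | tail _ hbc ih =>
    obtain ⟨-, ⟨i, hb, hc⟩ | ⟨i, hc, hb⟩⟩ := hbc
    · exact ih.trans (matchGraph_reachable_inr_of_mem hb hc)
    · exact ih.trans (matchGraph_reachable_inr_of_mem hb hc)

theorem matchGraph_connected (hW : ∀ i : W, ∃ j, (i, j) ∈ O)
    (hF : (coworkerGraph O).Connected) : (matchGraph O).Connected := by
  obtain ⟨j₀⟩ := hF.nonempty
  have toHub : ∀ v, (matchGraph O).Reachable v (Sum.inr j₀) := by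
    rintro (i | j)
    · obtain ⟨j, hj⟩ := hW i
      exact (matchGraph_adj_inl_inr hj).reachable.trans
        (matchGraph_reachable_inr_of_coworkerGraph_reachable (hF j j₀))
    · exact matchGraph_reachable_inr_of_coworkerGraph_reachable (hF j j₀)
  exact (SimpleGraph.connected_iff _).2
    ⟨fun u v => (toHub u).trans (toHub v).symm, ⟨Sum.inr j₀⟩⟩

end matchGraph

section snowball

variable {W F : Type} {E : Set (W × F)} {S : Set F}

lemma snowJ_subset_of_snowballClosed (hS : SnowballClosed E S) {j₀ : F} (h₀ : j₀ ∈ S) :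
    ∀ n, snowJ E j₀ n ⊆ S
  | 0 => Set.singleton_subset_iff.2 h₀
  | n + 1 => by
    have ih := snowJ_subset_of_snowballClosed hS h₀ n
    rintro j (hj | ⟨i, i', hne, ⟨ja, hja, ea⟩, ⟨jb, hjb, eb⟩, e, e'⟩)
    · exact ih hj
    · exact hS i i' j hne ⟨ja, ih hja, ea⟩ ⟨jb, ih hjb, eb⟩ e e'

theorem not_seedSnowballs_of_snowballClosed
    (h : ∀ j₀, ∃ S, SnowballClosed E S ∧ j₀ ∈ S ∧ S ≠ Set.univ) : ¬ SeedSnowballs E := by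
  rintro ⟨j₀, N, hJ, -⟩
  obtain ⟨S, hS, h₀, hne⟩ := h j₀
  exact hne (Set.eq_univ_of_univ_subset (hJ ▸ snowJ_subset_of_snowballClosed hS h₀ N))

end snowball

instance : DecidablePred (· ∈ counterE) := fun p =>
  decidable_of_iff (p ∈ ({(0, 0), (0, 1), (1, 0), (1, 1), (2, 1), (2, 3), (3, 3), (3, 2),
    (4, 0), (4, 2)} : Finset (Fin 5 × Fin 4))) (by simp [counterE])

lemma counterE_leaveOneOut_coworkerGraph_connected (i₀ : Fin 5) :
    (coworkerGraph
      {p : {i : Fin 5 // i ≠ i₀} × Fin 4 | ((p.1 : Fin 5), p.2) ∈ counterE}).Connected := by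
  unfold coworkerGraph
  revert i₀
  decide

lemma counterE_snowballClosed_pair : SnowballClosed counterE {0, 1} := by
  unfold SnowballClosed
  decide

lemma counterE_snowballClosed_singleton (j : Fin 4) (hj : 2 ≤ j) :
    SnowballClosed counterE {j} := by
  unfold SnowballClosed
  revert j
  decide

lemma counterE_exists_proper_snowballClosed (j₀ : Fin 4) :
    ∃ S, SnowballClosed counterE S ∧ j₀ ∈ S ∧ S ≠ Set.univ := by
  by_cases hj : j₀ ≤ 1
  · refine ⟨{0, 1}, counterE_snowballClosed_pair, ?_, fun h => ?_⟩
    · revert j₀; decide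
    · exact absurd (h ▸ Set.mem_univ (2 : Fin 4)) (by decide)
  · refine ⟨{j₀}, counterE_snowballClosed_singleton j₀ (by omega), rfl, fun h => ?_⟩
    exact absurd (h ▸ Set.mem_univ (j₀ + 1)) (by simp)

/-- a bipartite graph that is leave-one-out connected but does
not satisfy Seed-and-Snowballs connectivity for any seed. -/
theorem leaveOneOut_not_seedSnowballs :
    (∀ i₀ : Fin 5, (looGraph counterE i₀).Connected) ∧
    ¬ SeedSnowballs counterE := by
  have employed : ∀ i : Fin 5, ∃ j, (i, j) ∈ counterE := by decide
  exact ⟨fun i₀ => matchGraph_connected (fun i => employed i)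
      (counterE_leaveOneOut_coworkerGraph_connected i₀),
    not_seedSnowballs_of_snowballClosed counterE_exists_proper_snowballClosed⟩
end

section
/- In the noiseless Tukey model on a matching network that is a tree (connected, acyclic bipartite graph) with M nodes and M-1 observed edges, the interaction parameter β₀ is not identified: for any β in a cofinite subset of ℝ and with normalization α_{i₀} = 0, there exist productivity assignments (α^β, ψ^β) such that α_i^β + ψ_j^β + β α_i^β ψ_j^β = θ_{ij} for all observed edges (i,j), where θ is generated from true parameters (β₀, α, ψ). In particular, distinct values of β are consistent with the same observed data. -/
namespace SimpleGraph

variable {V : Type*} {G : SimpleGraph V}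

theorem IsAcyclic.eq_cons_or_eq_cons_of_adj (hG : G.IsAcyclic) {u v r : V} (huv : G.Adj u v)
    {p : G.Walk u r} {q : G.Walk v r} (hp : p.IsPath) (hq : q.IsPath) :
    p = Walk.cons huv q ∨ q = Walk.cons huv.symm p := by
  classical
  have path_eq {x y : V} {s t : G.Walk x y} (hs : s.IsPath) (ht : t.IsPath) : s = t :=
    congrArg Subtype.val <| (hG.subsingleton_path x y).elim ⟨s, hs⟩ ⟨t, ht⟩
  by_cases hu : u ∈ q.support
  · right
    have htake : q.takeUntil u hu = Walk.cons huv.symm Walk.nil :=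
      path_eq (hq.takeUntil hu) (by simp [huv.ne'])
    rw [← q.take_spec hu, htake, path_eq (hq.dropUntil hu) hp, Walk.cons_append, Walk.nil_append]
  · left
    exact path_eq hp ((Walk.cons_isPath_iff huv q).2 ⟨hq, hu⟩)

namespace Walk

variable {M : Type*} [CommGroup M]

def altProd (c : V → V → M) : ∀ {v w : V}, G.Walk v w → M
  | _, _, nil => 1
  | v, _, cons (v := u) _ q => c v u / altProd c q

@[simp] theorem altProd_nil (c : V → V → M) {v : V} : (nil : G.Walk v v).altProd c = 1 := rfl

@[simp] theorem altProd_cons (c : V → V → M) {v u w : V} (h : G.Adj v u) (q : G.Walk u w) :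
    (cons h q).altProd c = c v u / q.altProd c := rfl

end Walk

theorem IsTree.exists_mul_eq_of_adj {M : Type*} [CommGroup M] (hG : G.IsTree) (c : V → V → M)
    (hc : ∀ ⦃u v⦄, G.Adj u v → c u v = c v u) (r : V) :
    ∃ a : V → M, a r = 1 ∧ ∀ ⦃u v⦄, G.Adj u v → a u * a v = c u v := by
  choose p hp hp_unique using fun v => hG.existsUnique_path v r
  refine ⟨fun v => (p v).altProd c, ?_, fun u v huv => ?_⟩
  · show (p r).altProd c = 1
    rw [← hp_unique r .nil .nil, Walk.altProd_nil]
  · rcases hG.isAcyclic.eq_cons_or_eq_cons_of_adj huv (hp u) (hp v) with h | h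
    · simp only [h, Walk.altProd_cons, div_mul_cancel]
    · simp only [h, Walk.altProd_cons, mul_div_cancel, hc huv]

end SimpleGraph

def bipartiteWeight {W F M : Type*} [One M] (c : W → F → M) : W ⊕ F → W ⊕ F → M
  | .inl i, .inr j => c i j
  | .inr j, .inl i => c i j
  | _, _ => 1

theorem exists_mul_eq_of_isTree_matchGraph {W F : Type} {M : Type*} [CommGroup M]
    {O : Set (W × F)} (htree : (matchGraph O).IsTree) (c : W → F → M) (i₀ : W) :
    ∃ (a : W → M) (b : F → M), a i₀ = 1 ∧ ∀ p ∈ O, a p.1 * b p.2 = c p.1 p.2 := by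
  obtain ⟨a, ha₀, ha⟩ := htree.exists_mul_eq_of_adj (bipartiteWeight c)
    (by rintro (i | j) (i | j) - <;> rfl) (.inl i₀)
  exact ⟨a ∘ .inl, a ∘ .inr, ha₀, fun p hp => ha (.inl ⟨p.1, p.2, hp, rfl, rfl⟩)⟩

theorem add_add_mul_eq_of_mul_eq {K : Type*} [Field K] {β a b t : K} (hβ : β ≠ 0)
    (h : a * b = 1 + β * t) :
    (a - 1) / β + (b - 1) / β + β * ((a - 1) / β) * ((b - 1) / β) = t := by
  field_simp
  linear_combination h

theorem setOf_one_add_mul_eq_zero_subsingleton {K : Type*} [Field K] (t : K) :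
    {β : K | 1 + β * t = 0}.Subsingleton := by
  intro β (hβ : 1 + β * t = 0) γ (hγ : 1 + γ * t = 0)
  have ht : t ≠ 0 := by rintro rfl; simp at hβ
  exact mul_right_cancel₀ ht (by linear_combination hβ - hγ)

theorem tukey_tree_not_identified_general {W F : Type} [Fintype W] [Fintype F]
    (O : Set (W × F)) (htree : (matchGraph O).IsTree)
    (β₀ : ℝ) (α : W → ℝ) (ψ : F → ℝ) (i₀ : W) :
    ∃ S : Set ℝ, S.Finite ∧ ∀ β : ℝ, β ∉ S →
      ∃ (α' : W → ℝ) (ψ' : F → ℝ), α' i₀ = 0 ∧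
        ∀ p ∈ O, α' p.1 + ψ' p.2 + β * α' p.1 * ψ' p.2
          = α p.1 + ψ p.2 + β₀ * α p.1 * ψ p.2 := by
  set θ : W × F → ℝ := fun p => α p.1 + ψ p.2 + β₀ * α p.1 * ψ p.2
  refine ⟨{0} ∪ ⋃ p, {β | 1 + β * θ p = 0},
    (Set.finite_singleton 0).union <| Set.finite_iUnion fun p =>
      (setOf_one_add_mul_eq_zero_subsingleton (θ p)).finite, fun β hβ => ?_⟩
  simp only [Set.mem_union, Set.mem_singleton_iff, Set.mem_iUnion, Set.mem_ofPred_eq, not_or,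
    not_exists] at hβ
  obtain ⟨hβ0, hθ⟩ := hβ
  obtain ⟨a, b, ha₀, hab⟩ := exists_mul_eq_of_isTree_matchGraph htree
    (fun i j => Units.mk0 (1 + β * θ (i, j)) (hθ (i, j))) i₀
  refine ⟨fun i => (a i - 1) / β, fun j => (b j - 1) / β, by simp [ha₀], fun p hp => ?_⟩
  exact add_add_mul_eq_of_mul_eq hβ0 (by simpa using congrArg Units.val (hab p hp))

/-- In the noiseless Tukey model on a tree matching network,
β₀ is not identified: outside a finite exceptional set of β's, every β is
consistent with the observed θ's via suitably chosen productivities that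
satisfy the normalization α'_{i₀} = 0. -/
theorem tukey_tree_not_identified {W F : Type} [Fintype W] [Fintype F]
    (O : Set (W × F)) (htree : (matchGraph O).IsTree)
    (β₀ : ℝ) (α : W → ℝ) (ψ : F → ℝ) (i₀ : W) (hα₀ : α i₀ = 0) :
    ∃ S : Set ℝ, S.Finite ∧ ∀ β : ℝ, β ∉ S →
      ∃ (α' : W → ℝ) (ψ' : F → ℝ), α' i₀ = 0 ∧
        ∀ p ∈ O, α' p.1 + ψ' p.2 + β * α' p.1 * ψ' p.2
          = α p.1 + ψ p.2 + β₀ * α p.1 * ψ p.2 :=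
  tukey_tree_not_identified_general O htree β₀ α ψ i₀
end
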